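/- Let S be the dyadic tree and suppose (x_s)_{s∈S} is a normalized family in a Banach space X such that for every chain β ∈ C(S) the sequence (x_s)_{s∈β} is weakly null. Assume Stern's theorem for Borel sets of chains, and assume that every normalized weakly null sequence has a (1+ε)-basic subsequence. Then for every ε > 0 there exists a subtree T of S such that for every chain β of T, the sequence (x_s)_{s∈β} is (1+ε)-basic. -/

import Mathlib

open Filter Topology Set

noncomputable section

instance : TopologicalSpace (List Bool) := ⊥
instance : MeasurableSpace (List Bool) := ⊤

/-- A strictly increasing (for the initial-segment/prefix order of the dyadic tree
`S = List Bool`) enumeration of an infinite chain of `S`. -/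
def IsChainSeq (s : ℕ → List Bool) : Prop :=
  ∀ i : ℕ, s i <+: s (i + 1) ∧ s i ≠ s (i + 1)

/-- The Polish space `C(S)` of infinite chains of the dyadic tree, each chain enumerated
increasingly; the (product of discrete) topology coincides with the one inherited from
`2^S`. -/
abbrev ChainSpace : Type := {s : ℕ → List Bool // IsChainSeq s}

/-- `e` realizes a (dyadic) subtree of `S`, namely its range `T = e '' S`, via an order
isomorphism of `S` onto `T`: `T` has a single minimal element and every element of `T`
has exactly two immediate successors in `T`. -/
def IsSubtree (e : List Bool → List Bool) : Prop :=
  ∀ s t : List Bool, s <+: t ↔ e s <+: e t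

/-- `y` is `K`-basic: `‖∑_{i<m} a_i y_i‖ ≤ K ‖∑_{i<n} a_i y_i‖` for all `m ≤ n`. -/
def IsKBasic {X : Type*} [NormedAddCommGroup X] [NormedSpace ℝ X]
    (K : ℝ) (y : ℕ → X) : Prop :=
  ∀ m n : ℕ, m ≤ n → ∀ a : ℕ → ℝ,
    ‖∑ i ∈ Finset.range m, a i • y i‖ ≤ K * ‖∑ i ∈ Finset.range n, a i • y i‖

/-! Each inequality defining `(1+ε)`-basicness involves only finitely many terms of a chain,
so the chains along which `x` is `(1+ε)`-basic form a Borel set, and Stern's theorem yields a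
subtree all of whose chains are good or all bad. They cannot all be bad: any chain of the
subtree is weakly null, so it has a `(1+ε)`-basic subsequence, which is again a chain of the
subtree. -/

instance : DiscreteMeasurableSpace (List Bool) :=
  ⟨fun _ => MeasurableSpace.measurableSet_top⟩

theorem measurableSet_of_dependsOn {ι α : Type*} [MeasurableSpace α] [Countable α]
    [MeasurableSingletonClass α] {I : Set ι} (hI : I.Finite) {s : Set (ι → α)}
    (hs : DependsOn (· ∈ s) I) : MeasurableSet s := by
  have : Finite I := hI
  have hs_eq : s = I.domRestrict ⁻¹' (I.domRestrict '' s) := by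
    refine (subset_preimage_image _ _).antisymm ?_
    rintro γ ⟨β, hβ, hβγ⟩
    exact Eq.mp (hs fun i hi => congrFun hβγ ⟨i, hi⟩) hβ
  rw [hs_eq]
  exact I.measurable_restrict (to_countable _).measurableSet

theorem measurableSet_setOf_isKBasic_comp {α X : Type*} [MeasurableSpace α] [Countable α]
    [MeasurableSingletonClass α] [NormedAddCommGroup X] [NormedSpace ℝ X] (K : ℝ) (x : α → X) :
    MeasurableSet {β : ℕ → α | IsKBasic K (x ∘ β)} := by
  have hs_eq : {β : ℕ → α | IsKBasic K (x ∘ β)} = ⋂ n, {β | ∀ m ≤ n, ∀ a : ℕ → ℝ,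
      ‖∑ i ∈ Finset.range m, a i • x (β i)‖ ≤ K * ‖∑ i ∈ Finset.range n, a i • x (β i)‖} := by
    ext β
    simp only [mem_ofPred_eq, mem_iInter, IsKBasic, Function.comp_apply]
    exact forall_comm
  rw [hs_eq]
  refine MeasurableSet.iInter fun n => measurableSet_of_dependsOn (finite_Iio n) ?_
  intro β γ hβγ
  have hsum : ∀ m ≤ n, ∀ a : ℕ → ℝ,
      ∑ i ∈ Finset.range m, a i • x (β i) = ∑ i ∈ Finset.range m, a i • x (γ i) :=
    fun m hm a => Finset.sum_congr rfl fun i hi =>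
      by rw [hβγ i ((Finset.mem_range.1 hi).trans_le hm)]
  simp only [mem_ofPred_eq]
  exact propext <| forall₂_congr fun m hm => forall_congr' fun a => by
    rw [hsum m hm a, hsum n le_rfl a]

theorem IsChainSeq.prefix_of_le {s : ℕ → List Bool} (hs : IsChainSeq s) {i j : ℕ}
    (hij : i ≤ j) : s i <+: s j := by
  induction j, hij using Nat.le_induction with
  | base => exact List.prefix_refl _
  | succ j _ ih => exact ih.trans (hs j).1

theorem IsChainSeq.strictMono_length {s : ℕ → List Bool} (hs : IsChainSeq s) :
    StrictMono fun i => (s i).length :=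
  strictMono_nat_of_lt_succ fun i =>
    (hs i).1.length_le.lt_of_ne fun h => (hs i).2 ((hs i).1.eq_of_length h)

theorem IsChainSeq.comp_strictMono {s : ℕ → List Bool} (hs : IsChainSeq s) {n : ℕ → ℕ}
    (hn : StrictMono n) : IsChainSeq (s ∘ n) := fun i =>
  ⟨hs.prefix_of_le (hn i.lt_succ_self).le,
    fun h => (hs.strictMono_length (hn i.lt_succ_self)).ne (congrArg List.length h)⟩

theorem IsSubtree.isChainSeq_replicate {e : List Bool → List Bool} (he : IsSubtree e) :
    IsChainSeq fun i => e (List.replicate i false) := fun i =>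
  have hle : List.replicate i false <+: List.replicate (i + 1) false :=
    ⟨[false], by rw [List.replicate_succ']⟩
  ⟨(he _ _).1 hle, fun h => by
    have hge := (he (List.replicate (i + 1) false) (List.replicate i false)).2
      (by rw [show e _ = e _ from h])
    simpa using hge.length_le⟩

theorem subtree_basic_sequences_general
    {X : Type*} [NormedAddCommGroup X] [NormedSpace ℝ X]
    (x : List Bool → X) (hnorm : ∀ s, ‖x s‖ = 1)
    (hweak : ∀ β : ChainSpace, ∀ f : X →L[ℝ] ℝ,
      Tendsto (fun i => f (x (β.1 i))) atTop (𝓝 0))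
    (hStern : ∀ A : Set ChainSpace, MeasurableSet A →
      ∃ e : List Bool → List Bool, IsSubtree e ∧
        ((∀ β : ChainSpace, (∀ i, β.1 i ∈ Set.range e) → β ∈ A) ∨
         (∀ β : ChainSpace, (∀ i, β.1 i ∈ Set.range e) → β ∉ A)))
    (hsel : ∀ z : ℕ → X, (∀ n, ‖z n‖ = 1) →
      (∀ f : X →L[ℝ] ℝ, Tendsto (fun n => f (z n)) atTop (𝓝 0)) →
      ∀ ε : ℝ, 0 < ε → ∃ n : ℕ → ℕ, StrictMono n ∧ IsKBasic (1 + ε) (fun i => z (n i))) :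
    ∀ ε : ℝ, 0 < ε → ∃ e : List Bool → List Bool, IsSubtree e ∧
      ∀ β : ChainSpace, (∀ i, β.1 i ∈ Set.range e) →
        IsKBasic (1 + ε) (fun i => x (β.1 i)) := by
  intro ε hε
  have hA : MeasurableSet {β : ChainSpace | IsKBasic (1 + ε) (fun i => x (β.1 i))} :=
    measurable_subtype_coe (measurableSet_setOf_isKBasic_comp (1 + ε) x)
  obtain ⟨e, he, hbasic | hnot⟩ := hStern _ hA
  · exact ⟨e, he, hbasic⟩
  · have hβ := he.isChainSeq_replicate
    obtain ⟨n, hn, hsub⟩ := hsel _ (fun i => hnorm _) (hweak ⟨_, hβ⟩) ε hε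
    exact (hnot ⟨_, hβ.comp_strictMono hn⟩ (fun i => mem_range_self _) hsub).elim

/-- If `(x_s)_{s∈S}` is normalized and weakly null along every chain then (assuming Stern's
theorem for Borel sets, and that every normalized weakly null sequence has a `(1+ε)`-basic
subsequence) for every `ε > 0` there is a subtree `T` of `S` such that `(x_s)_{s∈β}` is
`(1+ε)`-basic for every chain `β` of `T`. -/
theorem subtree_basic_sequences
    {X : Type*} [NormedAddCommGroup X] [NormedSpace ℝ X] [CompleteSpace X]
    [TopologicalSpace.SeparableSpace X]
    (x : List Bool → X) (hnorm : ∀ s, ‖x s‖ = 1)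
    (hweak : ∀ β : ChainSpace, ∀ f : X →L[ℝ] ℝ,
      Tendsto (fun i => f (x (β.1 i))) atTop (𝓝 0))
    (hStern : ∀ A : Set ChainSpace, MeasurableSet A →
      ∃ e : List Bool → List Bool, IsSubtree e ∧
        ((∀ β : ChainSpace, (∀ i, β.1 i ∈ Set.range e) → β ∈ A) ∨
         (∀ β : ChainSpace, (∀ i, β.1 i ∈ Set.range e) → β ∉ A)))
    (hsel : ∀ z : ℕ → X, (∀ n, ‖z n‖ = 1) →
      (∀ f : X →L[ℝ] ℝ, Tendsto (fun n => f (z n)) atTop (𝓝 0)) →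
      ∀ ε : ℝ, 0 < ε → ∃ n : ℕ → ℕ, StrictMono n ∧ IsKBasic (1 + ε) (fun i => z (n i))) :
    ∀ ε : ℝ, 0 < ε → ∃ e : List Bool → List Bool, IsSubtree e ∧
      ∀ β : ChainSpace, (∀ i, β.1 i ∈ Set.range e) →
        IsKBasic (1 + ε) (fun i => x (β.1 i)) :=
  subtree_basic_sequences_general x hnorm hweak hStern hsel
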